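/- Combining the above: for finite-dimensional class-2 nilpotent Lie ℚ-algebras L₁ = V₁⊕W₁ and L₂ = V₂⊕W₂ with [Lᵢ,Lᵢ] = Z(Lᵢ) = Wᵢ, dim V₁ = dim V₂ and dim W₁ = dim W₂, we have E(L₁) ≅ E(L₂) if and only if L₁ ≅ L₂. -/

import Mathlib

/-- An alternating bilinear map `V × V → W` over `ℚ`. -/
structure AltBil (V W : Type) [AddCommGroup V] [Module ℚ V]
    [AddCommGroup W] [Module ℚ W] where
  toFun : V →ₗ[ℚ] V →ₗ[ℚ] W
  alt : ∀ v : V, toFun v v = 0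

variable {V W : Type} [AddCommGroup V] [Module ℚ V] [AddCommGroup W] [Module ℚ W]

/-- The nilpotent class-2 Lie algebra `V ⊕ W` with bracket `[(v,w),(v',w')] = (0, ω v v')`. -/
def Hsbg (_ω : AltBil V W) : Type := V × W

instance (ω : AltBil V W) : AddCommGroup (Hsbg ω) := inferInstanceAs (AddCommGroup (V × W))
instance (ω : AltBil V W) : Module ℚ (Hsbg ω) := inferInstanceAs (Module ℚ (V × W))

instance (ω : AltBil V W) : LieRing (Hsbg ω) where
  bracket x y := (0, ω.toFun x.1 y.1)
  add_lie x y z := show (((0:V), ω.toFun (x.1 + y.1) z.1) : V × W)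
      = ((0:V), ω.toFun x.1 z.1) + ((0:V), ω.toFun y.1 z.1) by simp [Prod.ext_iff]
  lie_add x y z := show (((0:V), ω.toFun x.1 (y.1 + z.1)) : V × W)
      = ((0:V), ω.toFun x.1 y.1) + ((0:V), ω.toFun x.1 z.1) by simp [Prod.ext_iff]
  lie_self x := show (((0:V), ω.toFun x.1 x.1) : V × W) = 0 by simp [ω.alt]
  leibniz_lie x y z := show (((0:V), ω.toFun x.1 ((0:V), ω.toFun y.1 z.1).1) : V × W)
      = ((0:V), ω.toFun ((0:V), ω.toFun x.1 y.1).1 z.1)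
        + ((0:V), ω.toFun y.1 ((0:V), ω.toFun x.1 z.1).1) by simp [Prod.ext_iff]

instance (ω : AltBil V W) : LieAlgebra ℚ (Hsbg ω) where
  lie_smul t x y := show (((0:V), ω.toFun x.1 (t • y.1)) : V × W)
      = t • (((0:V), ω.toFun x.1 y.1) : V × W) by simp [Prod.ext_iff]

theorem Hsbg.bracket_def (ω : AltBil V W) (x y : Hsbg ω) :
    ⁅x, y⁆ = ((0 : V), ω.toFun x.1 y.1) := rfl

/-- The pairing `(u, v) ↦ Σᵢ uᵢ · (coordinates of v)ᵢ` attached to a basis `b` of `V`. -/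
noncomputable def basisPairing {n : ℕ} (b : Module.Basis (Fin n) ℚ V) : (Fin n → ℚ) →ₗ[ℚ] V →ₗ[ℚ] ℚ :=
  LinearMap.mk₂ ℚ (fun u v => ∑ i, u i * b.repr v i)
    (by intros m₁ m₂ v; simp [add_mul, Finset.sum_add_distrib])
    (by intros c m v; simp [Finset.mul_sum, mul_assoc])
    (by intros m v₁ v₂; simp [mul_add, Finset.sum_add_distrib])
    (by intros c m v; simp [Finset.mul_sum, mul_left_comm])

/-- The alternating bilinear map of the extension `E(L)`:
`ω_E((u,v),(u',v')) = (⟨u,v'⟩ - ⟨u',v⟩, ω(v,v'))` on `(U ⊕ V) × (U ⊕ V) → T ⊕ W`,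
where `U = ℚⁿ`, `T = ℚ`. -/
noncomputable def extAltBil {n : ℕ} (ω : AltBil V W) (b : Module.Basis (Fin n) ℚ V) :
    AltBil ((Fin n → ℚ) × V) (ℚ × W) where
  toFun :=
    LinearMap.mk₂ ℚ
      (fun x y => (basisPairing b x.1 y.2 - basisPairing b y.1 x.2, ω.toFun x.2 y.2))
      (by intros m₁ m₂ v; simp [Prod.ext_iff]; ring)
      (by intros c m v; simp [Prod.smul_mk, smul_sub, smul_eq_mul, Prod.ext_iff]; ring)
      (by intros m v₁ v₂; simp [Prod.ext_iff]; ring)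
      (by intros c m v; simp [Prod.smul_mk, smul_sub, smul_eq_mul, Prod.ext_iff]; ring)
  alt x := by simp [Prod.ext_iff, ω.alt]

/-- The extension `E(L)` of `L = V ⊕ W`: the class-2 nilpotent Lie algebra on
`(U ⊕ V) ⊕ (T ⊕ W)` with `[uᵢ,uⱼ] = 0`, `[uᵢ,vⱼ] = δᵢⱼ t`, `[vᵢ,vⱼ] = ω(vᵢ,vⱼ)`,
`T ⊕ W` central. -/
def ExtE {n : ℕ} (ω : AltBil V W) (b : Module.Basis (Fin n) ℚ V) : Type :=
  Hsbg (extAltBil ω b)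

noncomputable instance {n : ℕ} (ω : AltBil V W) (b : Module.Basis (Fin n) ℚ V) : LieRing (ExtE ω b) :=
  inferInstanceAs (LieRing (Hsbg (extAltBil ω b)))
noncomputable instance {n : ℕ} (ω : AltBil V W) (b : Module.Basis (Fin n) ℚ V) : LieAlgebra ℚ (ExtE ω b) :=
  inferInstanceAs (LieAlgebra ℚ (Hsbg (extAltBil ω b)))

section Aux

lemma basisPairing_apply {n : ℕ} (b : Module.Basis (Fin n) ℚ V) (u : Fin n → ℚ) (v : V) :
    basisPairing b u v = ∑ i, u i * b.repr v i := rfl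

lemma basisPairing_basis {n : ℕ} (b : Module.Basis (Fin n) ℚ V) (u : Fin n → ℚ) (j : Fin n) :
    basisPairing b u (b j) = u j := by
  simp [basisPairing_apply, Module.Basis.repr_self, Finsupp.single_apply, mul_ite]

lemma basisPairing_single {n : ℕ} (b : Module.Basis (Fin n) ℚ V) (j : Fin n) (s : ℚ) (v : V) :
    basisPairing b (Pi.single j s) v = s * b.repr v j := by
  simp [basisPairing_apply, Pi.single_apply, ite_mul]

lemma basisPairing_left_zero {n : ℕ} (b : Module.Basis (Fin n) ℚ V) {u : Fin n → ℚ}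
    (h : ∀ v, basisPairing b u v = 0) : u = 0 := by
  funext j
  simpa [basisPairing_basis] using h (b j)

lemma basisPairing_right_zero {n : ℕ} (b : Module.Basis (Fin n) ℚ V) {v : V}
    (h : ∀ u, basisPairing b u v = 0) : v = 0 := by
  have h1 : ∀ j, b.repr v j = 0 := fun j => by
    simpa [basisPairing_single] using h (Pi.single j 1)
  have h2 : b.repr v = 0 := Finsupp.ext h1
  simpa using congrArg b.repr.symm h2

lemma extAltBil_apply {n : ℕ} (ω : AltBil V W) (b : Module.Basis (Fin n) ℚ V)
    (x y : (Fin n → ℚ) × V) :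
    (extAltBil ω b).toFun x y
      = (basisPairing b x.1 y.2 - basisPairing b y.1 x.2, ω.toFun x.2 y.2) := rfl

lemma extAltBil_span {n : ℕ} (hn : 0 < n) (ω : AltBil V W) (b : Module.Basis (Fin n) ℚ V)
    (hspan : Submodule.span ℚ (Set.range fun p : V × V => ω.toFun p.1 p.2) = ⊤) :
    Submodule.span ℚ (Set.range fun p : ((Fin n → ℚ) × V) × ((Fin n → ℚ) × V) =>
      (extAltBil ω b).toFun p.1 p.2) = ⊤ := by
  set S := Set.range fun p : ((Fin n → ℚ) × V) × ((Fin n → ℚ) × V) =>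
      (extAltBil ω b).toFun p.1 p.2 with hS
  rw [Submodule.eq_top_iff']
  rintro ⟨t, w⟩
  have h1 : ((t, 0) : ℚ × W) ∈ Submodule.span ℚ S := by
    apply Submodule.subset_span
    refine ⟨((Pi.single ⟨0, hn⟩ t, 0), (0, b ⟨0, hn⟩)), ?_⟩
    simp [extAltBil_apply, basisPairing_single, basisPairing_basis]
  have h2 : ∀ w' : W, ((0, w') : ℚ × W) ∈ Submodule.span ℚ S := by
    intro w'
    have hw' : w' ∈ Submodule.span ℚ (Set.range fun p : V × V => ω.toFun p.1 p.2) :=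
      hspan ▸ Submodule.mem_top
    induction hw' using Submodule.span_induction with
    | mem x hx =>
      obtain ⟨⟨v, v'⟩, rfl⟩ := hx
      apply Submodule.subset_span
      refine ⟨((0, v), (0, v')), ?_⟩
      simp [extAltBil_apply]
    | zero => exact Submodule.zero_mem _
    | add x y _ _ hx hy => simpa using Submodule.add_mem _ hx hy
    | smul c x _ hx => simpa [Prod.smul_mk] using Submodule.smul_mem _ c hx
  have := Submodule.add_mem _ h1 (h2 w)
  simpa using this

variable {V₁ W₁ V₂ W₂ : Type}
  [AddCommGroup V₁] [Module ℚ V₁] [AddCommGroup W₁] [Module ℚ W₁]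
  [AddCommGroup V₂] [Module ℚ V₂] [AddCommGroup W₂] [Module ℚ W₂]

/-- Structure lemma: a Lie isomorphism of `Hsbg`'s maps `0 ⊕ W₁` into `0 ⊕ W₂`,
provided the values of `ω₁` span `W₁`. -/
lemma Hsbg.fst_map_snd_eq_zero (ω₁ : AltBil V₁ W₁) (ω₂ : AltBil V₂ W₂)
    (hspan : Submodule.span ℚ (Set.range fun p : V₁ × V₁ => ω₁.toFun p.1 p.2) = ⊤)
    (e : Hsbg ω₁ ≃ₗ⁅ℚ⁆ Hsbg ω₂) (w : W₁) : (e ((0 : V₁), w)).1 = 0 := by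
  let L : W₁ →ₗ[ℚ] V₂ :=
    (LinearMap.fst ℚ V₂ W₂).comp
      ((e.toLinearEquiv : Hsbg ω₁ →ₗ[ℚ] Hsbg ω₂).comp (LinearMap.inr ℚ V₁ W₁))
  have hker : Submodule.span ℚ (Set.range fun p : V₁ × V₁ => ω₁.toFun p.1 p.2)
      ≤ LinearMap.ker L := by
    rw [Submodule.span_le]
    rintro z ⟨⟨v, v'⟩, rfl⟩
    let a : Hsbg ω₁ := (v, 0)
    let a' : Hsbg ω₁ := (v', 0)
    have h1 : (((0 : V₁), ω₁.toFun v v') : Hsbg ω₁) = ⁅a, a'⁆ := (Hsbg.bracket_def ω₁ a a').symm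
    have h2 : L (ω₁.toFun v v') = (e (((0:V₁), ω₁.toFun v v') : Hsbg ω₁)).1 := rfl
    have h3 : e ⁅a, a'⁆ = ⁅e a, e a'⁆ := LieEquiv.map_lie e a a'
    show L (ω₁.toFun v v') = 0
    rw [h2, h1, h3, Hsbg.bracket_def]
  have hw : w ∈ LinearMap.ker L := hker (hspan ▸ Submodule.mem_top)
  exact hw

lemma ExtE.map_bracket {n : ℕ} (ω₁ : AltBil V₁ W₁) (ω₂ : AltBil V₂ W₂)
    (b₁ : Module.Basis (Fin n) ℚ V₁) (b₂ : Module.Basis (Fin n) ℚ V₂)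
    (Ψ : ExtE ω₁ b₁ ≃ₗ⁅ℚ⁆ ExtE ω₂ b₂) (x y : (Fin n → ℚ) × V₁) :
    Ψ ((0 : (Fin n → ℚ) × V₁), (extAltBil ω₁ b₁).toFun x y)
      = ((0 : (Fin n → ℚ) × V₂),
          (extAltBil ω₂ b₂).toFun (Ψ ((x, 0) : ExtE ω₁ b₁)).1 (Ψ ((y, 0) : ExtE ω₁ b₁)).1) := by
  let a : ExtE ω₁ b₁ := (x, 0)
  let a' : ExtE ω₁ b₁ := (y, 0)
  have h1 : (((0 : (Fin n → ℚ) × V₁), (extAltBil ω₁ b₁).toFun x y) : ExtE ω₁ b₁) = ⁅a, a'⁆ :=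
    (Hsbg.bracket_def (extAltBil ω₁ b₁) a a').symm
  have h2 : Ψ ⁅a, a'⁆ = ⁅Ψ a, Ψ a'⁆ := LieEquiv.map_lie Ψ a a'
  have h3 : (⁅Ψ a, Ψ a'⁆ : ExtE ω₂ b₂)
      = ((0 : (Fin n → ℚ) × V₂), (extAltBil ω₂ b₂).toFun (Ψ a).1 (Ψ a').1) :=
    Hsbg.bracket_def (extAltBil ω₂ b₂) (Ψ a) (Ψ a')
  rw [h1, h2, h3]

lemma ExtE.map_t {n : ℕ} (hn : 0 < n) (ω₁ : AltBil V₁ W₁) (ω₂ : AltBil V₂ W₂)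
    (b₁ : Module.Basis (Fin n) ℚ V₁) (b₂ : Module.Basis (Fin n) ℚ V₂)
    (hspan₁ : Submodule.span ℚ (Set.range fun p : V₁ × V₁ => ω₁.toFun p.1 p.2) = ⊤)
    (Ψ : ExtE ω₁ b₁ ≃ₗ⁅ℚ⁆ ExtE ω₂ b₂) :
    (Ψ ((0 : (Fin n → ℚ) × V₁), ((1:ℚ), (0:W₁)))).2.2 = 0 := by
  have hstr : ∀ z : ℚ × W₁, (Ψ ((0 : (Fin n → ℚ) × V₁), z)).1 = 0 :=
    Hsbg.fst_map_snd_eq_zero (extAltBil ω₁ b₁) (extAltBil ω₂ b₂)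
      (extAltBil_span hn ω₁ b₁ hspan₁) Ψ
  rw [← Module.forall_dual_apply_eq_zero_iff ℚ]
  intro μ
  by_contra hs
  let lam : (ℚ × W₁) →ₗ[ℚ] ℚ :=
    μ.comp ((LinearMap.snd ℚ ℚ W₂).comp ((LinearMap.snd ℚ ((Fin n → ℚ) × V₂) (ℚ × W₂)).comp
      ((Ψ.toLinearEquiv : ExtE ω₁ b₁ →ₗ[ℚ] ExtE ω₂ b₂).comp
        (LinearMap.inr ℚ ((Fin n → ℚ) × V₁) (ℚ × W₁)))))
  have hlam : ∀ z : ℚ × W₁, lam z = μ ((Ψ ((0 : (Fin n → ℚ) × V₁), z)).2.2) := fun z => rfl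
  have hs' : lam ((1:ℚ), (0:W₁)) ≠ 0 := by rw [hlam]; exact hs
  have hlam2 : ∀ c : ℚ, lam (c, (0:W₁)) = c * lam ((1:ℚ), (0:W₁)) := by
    intro c
    have hc : ((c, (0:W₁)) : ℚ × W₁) = c • ((1:ℚ), (0:W₁)) := by
      simp [Prod.smul_mk]
    rw [hc, map_smul, smul_eq_mul]
  set i0 : Fin n := ⟨0, hn⟩ with hi0
  set eU : (Fin n → ℚ) × V₂ := (Pi.single i0 1, 0) with heU
  set x₀ : (Fin n → ℚ) × V₁ := (Ψ.symm ((eU, 0) : ExtE ω₂ b₂)).1 with hx₀def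
  let I : ((Fin n → ℚ) × V₁) →ₗ[ℚ] ExtE ω₁ b₁ := LinearMap.inl ℚ ((Fin n → ℚ) × V₁) (ℚ × W₁)
  let J : (ℚ × W₁) →ₗ[ℚ] ExtE ω₁ b₁ := LinearMap.inr ℚ ((Fin n → ℚ) × V₁) (ℚ × W₁)
  have hdecomp : I x₀ = Ψ.symm ((eU, 0) : ExtE ω₂ b₂)
      - J ((Ψ.symm ((eU, 0) : ExtE ω₂ b₂)).2) := by
    refine Prod.ext ?_ ?_
    · show x₀ = (Ψ.symm ((eU, 0) : ExtE ω₂ b₂)).1 - (0 : (Fin n → ℚ) × V₁)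
      rw [sub_zero]
    · show (0 : ℚ × W₁) = (Ψ.symm ((eU, 0) : ExtE ω₂ b₂)).2
        - (Ψ.symm ((eU, 0) : ExtE ω₂ b₂)).2
      rw [sub_self]
  have hF : (Ψ ((x₀, (0 : ℚ × W₁)) : ExtE ω₁ b₁)).1 = eU := by
    show (Ψ (I x₀)).1 = eU
    rw [hdecomp]
    have hms : Ψ (Ψ.symm ((eU, 0) : ExtE ω₂ b₂) - J ((Ψ.symm ((eU, 0) : ExtE ω₂ b₂)).2))
        = Ψ (Ψ.symm ((eU, 0) : ExtE ω₂ b₂)) - Ψ (J ((Ψ.symm ((eU, 0) : ExtE ω₂ b₂)).2)) :=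
      Ψ.toLieHom.map_sub _ _
    rw [hms]; erw [Ψ.apply_symm_apply]
    have h6 := hstr ((Ψ.symm ((eU, 0) : ExtE ω₂ b₂)).2)
    have h7 : (Ψ (J ((Ψ.symm ((eU, 0) : ExtE ω₂ b₂)).2))).1 = 0 := h6
    show ((eU, (0 : ℚ × W₂)) : ExtE ω₂ b₂).1 - (Ψ (J ((Ψ.symm ((eU, 0) : ExtE ω₂ b₂)).2))).1 = eU
    rw [h7, sub_zero]
  have hx0ne : x₀ ≠ 0 := by
    intro h0
    have h1 : Ψ.symm ((eU, 0) : ExtE ω₂ b₂)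
        = ((0 : (Fin n → ℚ) × V₁), (Ψ.symm ((eU, 0) : ExtE ω₂ b₂)).2) :=
      Prod.ext h0 rfl
    have h2 := hstr ((Ψ.symm ((eU, 0) : ExtE ω₂ b₂)).2)
    rw [← h1] at h2; erw [Ψ.apply_symm_apply] at h2
    have h3 : eU = 0 := h2
    rw [heU] at h3
    have h4 := congrFun (congrArg Prod.fst h3) i0
    simp [Pi.single_apply] at h4
  have hB : ∀ y : (Fin n → ℚ) × V₁, lam ((extAltBil ω₁ b₁).toFun x₀ y) = 0 := by
    intro y
    rw [hlam, ExtE.map_bracket ω₁ ω₂ b₁ b₂ Ψ x₀ y, hF]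
    simp [extAltBil_apply, heU]
  have hv2 : x₀.2 = 0 := by
    apply basisPairing_right_zero b₁
    intro u'
    have h3 := hB (u', 0)
    rw [extAltBil_apply] at h3
    simp only [map_zero, LinearMap.zero_apply, zero_sub] at h3
    rw [hlam2] at h3
    rcases mul_eq_zero.mp h3 with h | h
    · linarith [neg_eq_zero.mp h]
    · exact absurd h hs'
  have hv1 : x₀.1 = 0 := by
    apply basisPairing_left_zero b₁
    intro v'
    have h3 := hB (0, v')
    rw [extAltBil_apply] at h3
    simp only [hv2, map_zero, LinearMap.zero_apply, sub_zero] at h3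
    rw [hlam2] at h3
    rcases mul_eq_zero.mp h3 with h | h
    · exact h
    · exact absurd h hs'
  exact hx0ne (Prod.ext hv1 hv2)

lemma ExtE.bracket_zero (ω : AltBil V W) (b : Module.Basis (Fin 0) ℚ V)
    [Subsingleton W] (a c : ExtE ω b) : ⁅a, c⁆ = 0 := by
  erw [Hsbg.bracket_def (extAltBil ω b) a c]
  refine Prod.ext rfl (Prod.ext ?_ (Subsingleton.elim _ _))
  show ((extAltBil ω b).toFun a.1 c.1).1 = 0
  rw [extAltBil_apply]
  show basisPairing b a.1.1 c.1.2 - basisPairing b c.1.1 a.1.2 = 0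
  simp [basisPairing_apply]

end Aux

/-- `E(L₁) ≅ E(L₂)` if and only if `L₁ ≅ L₂`. -/
theorem extE_iso_iff_iso
    {V₁ W₁ V₂ W₂ : Type}
    [AddCommGroup V₁] [Module ℚ V₁] [AddCommGroup W₁] [Module ℚ W₁]
    [AddCommGroup V₂] [Module ℚ V₂] [AddCommGroup W₂] [Module ℚ W₂]
    [FiniteDimensional ℚ V₁] [FiniteDimensional ℚ W₁]
    [FiniteDimensional ℚ V₂] [FiniteDimensional ℚ W₂]
    {n : ℕ} (ω₁ : AltBil V₁ W₁) (ω₂ : AltBil V₂ W₂)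
    (b₁ : Module.Basis (Fin n) ℚ V₁) (b₂ : Module.Basis (Fin n) ℚ V₂)
    (hm : Module.finrank ℚ W₁ = Module.finrank ℚ W₂)
    (hnd₁ : ∀ x : V₁, (∀ v : V₁, ω₁.toFun x v = 0) → x = 0)
    (hspan₁ : Submodule.span ℚ (Set.range fun p : V₁ × V₁ => ω₁.toFun p.1 p.2) = ⊤)
    (hnd₂ : ∀ x : V₂, (∀ v : V₂, ω₂.toFun x v = 0) → x = 0)
    (hspan₂ : Submodule.span ℚ (Set.range fun p : V₂ × V₂ => ω₂.toFun p.1 p.2) = ⊤) :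
    Nonempty (ExtE ω₁ b₁ ≃ₗ⁅ℚ⁆ ExtE ω₂ b₂) ↔ Nonempty (Hsbg ω₁ ≃ₗ⁅ℚ⁆ Hsbg ω₂) := by
  have hV12 : Module.finrank ℚ V₁ = Module.finrank ℚ V₂ := by
    rw [Module.finrank_eq_card_basis b₁, Module.finrank_eq_card_basis b₂]
  rcases Nat.eq_zero_or_pos n with hn | hn
  · -- n = 0 : both sides hold
    subst hn
    haveI hsV₁ : Subsingleton V₁ := b₁.repr.toEquiv.subsingleton
    haveI hsV₂ : Subsingleton V₂ := b₂.repr.toEquiv.subsingleton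
    haveI hsW₁ : Subsingleton W₁ := by
      refine subsingleton_of_forall_eq 0 fun w => ?_
      have hw : w ∈ Submodule.span ℚ (Set.range fun p : V₁ × V₁ => ω₁.toFun p.1 p.2) :=
        hspan₁ ▸ Submodule.mem_top
      have hbot : Submodule.span ℚ (Set.range fun p : V₁ × V₁ => ω₁.toFun p.1 p.2) = ⊥ :=
        Submodule.span_eq_bot.mpr (by
          rintro _ ⟨p, rfl⟩
          have h0 : p.1 = (0 : V₁) := Subsingleton.elim _ _
          simp [h0])
      rw [hbot] at hw
      exact Submodule.mem_bot ℚ |>.mp hw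
    haveI hsW₂ : Subsingleton W₂ := by
      refine subsingleton_of_forall_eq 0 fun w => ?_
      have hw : w ∈ Submodule.span ℚ (Set.range fun p : V₂ × V₂ => ω₂.toFun p.1 p.2) :=
        hspan₂ ▸ Submodule.mem_top
      have hbot : Submodule.span ℚ (Set.range fun p : V₂ × V₂ => ω₂.toFun p.1 p.2) = ⊥ :=
        Submodule.span_eq_bot.mpr (by
          rintro _ ⟨p, rfl⟩
          have h0 : p.1 = (0 : V₂) := Subsingleton.elim _ _
          simp [h0])
      rw [hbot] at hw
      exact Submodule.mem_bot ℚ |>.mp hw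
    haveI : Subsingleton (Hsbg ω₁) := inferInstanceAs (Subsingleton (V₁ × W₁))
    haveI : Subsingleton (Hsbg ω₂) := inferInstanceAs (Subsingleton (V₂ × W₂))
    constructor <;> intro _
    · exact ⟨{ LinearEquiv.ofSubsingleton (Hsbg ω₁) (Hsbg ω₂) with
        map_lie' := Subsingleton.elim _ _ }⟩
    · let e : ExtE ω₁ b₁ ≃ₗ[ℚ] ExtE ω₂ b₂ :=
        LinearEquiv.prodCongr
          (LinearEquiv.prodCongr (LinearEquiv.refl ℚ (Fin 0 → ℚ)) (LinearEquiv.ofSubsingleton V₁ V₂))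
          (LinearEquiv.prodCongr (LinearEquiv.refl ℚ ℚ) (LinearEquiv.ofSubsingleton W₁ W₂))
      refine ⟨{ e with map_lie' := ?_ }⟩
      intro x y
      have h1 : (⁅x, y⁆ : ExtE ω₁ b₁) = 0 := ExtE.bracket_zero ω₁ b₁ x y
      have h2 : ∀ a c : ExtE ω₂ b₂, ⁅a, c⁆ = 0 := ExtE.bracket_zero ω₂ b₂
      rw [h1, h2]
      exact map_zero e
  · constructor
    · -- forward: E(L₁) ≅ E(L₂) → L₁ ≅ L₂
      rintro ⟨Ψ⟩
      have hT' : (Ψ.symm ((0 : (Fin n → ℚ) × V₂), ((1:ℚ), (0:W₂)))).2.2 = 0 :=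
        ExtE.map_t hn ω₂ ω₁ b₂ b₁ hspan₂ Ψ.symm
      have hstr : ∀ z : ℚ × W₁, (Ψ ((0 : (Fin n → ℚ) × V₁), z)).1 = 0 :=
        Hsbg.fst_map_snd_eq_zero _ _ (extAltBil_span hn ω₁ b₁ hspan₁) Ψ
      have hstr' : ∀ z : ℚ × W₂, (Ψ.symm ((0 : (Fin n → ℚ) × V₂), z)).1 = 0 :=
        Hsbg.fst_map_snd_eq_zero _ _ (extAltBil_span hn ω₂ b₂ hspan₂) Ψ.symm
      let J₁ : (ℚ × W₁) →ₗ[ℚ] ExtE ω₁ b₁ := LinearMap.inr ℚ ((Fin n → ℚ) × V₁) (ℚ × W₁)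
      let K₂ : (ℚ × W₂) →ₗ[ℚ] ExtE ω₂ b₂ := LinearMap.inr ℚ ((Fin n → ℚ) × V₂) (ℚ × W₂)
      let hmap : W₁ →ₗ[ℚ] W₂ :=
        (LinearMap.snd ℚ ℚ W₂).comp ((LinearMap.snd ℚ ((Fin n → ℚ) × V₂) (ℚ × W₂)).comp
          ((Ψ.toLinearEquiv : ExtE ω₁ b₁ →ₗ[ℚ] ExtE ω₂ b₂).comp
            (J₁.comp (LinearMap.inr ℚ ℚ W₁))))
      let fmap : V₁ →ₗ[ℚ] V₂ :=
        (LinearMap.snd ℚ (Fin n → ℚ) V₂).comp ((LinearMap.fst ℚ ((Fin n → ℚ) × V₂) (ℚ × W₂)).comp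
          ((Ψ.toLinearEquiv : ExtE ω₁ b₁ →ₗ[ℚ] ExtE ω₂ b₂).comp
            ((LinearMap.inl ℚ ((Fin n → ℚ) × V₁) (ℚ × W₁)).comp
              (LinearMap.inr ℚ (Fin n → ℚ) V₁))))
      have hrel : ∀ v v' : V₁, hmap (ω₁.toFun v v') = ω₂.toFun (fmap v) (fmap v') := by
        intro v v'
        have hk := ExtE.map_bracket ω₁ ω₂ b₁ b₂ Ψ ((0 : Fin n → ℚ), v) ((0 : Fin n → ℚ), v')
        have h1 : (extAltBil ω₁ b₁).toFun ((0 : Fin n → ℚ), v) ((0 : Fin n → ℚ), v')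
            = ((0:ℚ), ω₁.toFun v v') := by
          rw [extAltBil_apply]
          simp [basisPairing_apply]
        rw [h1] at hk
        have h2 := congrArg (fun z : ExtE ω₂ b₂ => z.2.2) hk
        exact h2
      have hinj : Function.Injective hmap := by
        refine (injective_iff_map_eq_zero hmap).mpr fun w hw => ?_
        set t₂ : ℚ := (Ψ ((0 : (Fin n → ℚ) × V₁), ((0:ℚ), w))).2.1 with ht₂
        have h1 : Ψ (J₁ ((0:ℚ), w)) = K₂ (t₂, (0:W₂)) := by
          refine Prod.ext ?_ (Prod.ext ?_ ?_)
          · exact hstr ((0:ℚ), w)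
          · rfl
          · exact hw
        set c : ℚ := (Ψ.symm ((0 : (Fin n → ℚ) × V₂), ((1:ℚ), (0:W₂)))).2.1 with hc
        have h2 : Ψ.symm ((0 : (Fin n → ℚ) × V₂), ((1:ℚ), (0:W₂)))
            = ((0 : (Fin n → ℚ) × V₁), (c, (0:W₁))) :=
          Prod.ext (hstr' _) (Prod.ext rfl hT')
        have h3 : Ψ (J₁ (c, (0:W₁))) = K₂ ((1:ℚ), (0:W₂)) := by
          have h3' : Ψ ((0 : (Fin n → ℚ) × V₁), (c, (0:W₁))) = ((0 : (Fin n → ℚ) × V₂), ((1:ℚ), (0:W₂))) := by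
            rw [← h2]; erw [Ψ.apply_symm_apply]
          exact h3'
        have h4 : Ψ (J₁ ((t₂ * c : ℚ), (0:W₁))) = K₂ (t₂, (0:W₂)) := by
          have hp : (((t₂ * c : ℚ), (0:W₁)) : ℚ × W₁) = t₂ • ((c, (0:W₁)) : ℚ × W₁) := by
            simp [Prod.smul_mk]
          rw [hp, map_smul]
          have hsm : Ψ (t₂ • J₁ ((c, (0:W₁)) : ℚ × W₁)) = t₂ • Ψ (J₁ ((c, (0:W₁)) : ℚ × W₁)) :=
            Ψ.toLieHom.map_smul t₂ _
          rw [hsm, h3, ← map_smul]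
          congr 1
          simp [Prod.smul_mk]
        have h5 : J₁ ((0:ℚ), w) = J₁ ((t₂ * c : ℚ), (0:W₁)) :=
          Ψ.toLinearEquiv.injective (h1.trans h4.symm)
        have h6 := congrArg (fun z : ExtE ω₁ b₁ => z.2.2) h5
        exact h6
      have finj : Function.Injective fmap := by
        refine (injective_iff_map_eq_zero fmap).mpr fun v hv => ?_
        refine hnd₁ v fun v' => ?_
        refine hinj ?_
        rw [hrel v v', hv]
        simp
      have fsurj : Function.Surjective fmap :=
        (LinearMap.injective_iff_surjective_of_finrank_eq_finrank hV12).mp finj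
      have hsurj : Function.Surjective hmap :=
        (LinearMap.injective_iff_surjective_of_finrank_eq_finrank hm).mp hinj
      let e : Hsbg ω₁ ≃ₗ[ℚ] Hsbg ω₂ := LinearEquiv.prodCongr
          (LinearEquiv.ofBijective fmap ⟨finj, fsurj⟩)
          (LinearEquiv.ofBijective hmap ⟨hinj, hsurj⟩)
      refine ⟨{ e with map_lie' := ?_ }⟩
      intro x y
      show e ⁅x, y⁆ = ⁅e x, e y⁆
      rw [Hsbg.bracket_def ω₁ x y, Hsbg.bracket_def ω₂]
      refine Prod.ext ?_ ?_
      · show fmap 0 = 0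
        exact map_zero fmap
      · show hmap (ω₁.toFun x.1 y.1) = ω₂.toFun (fmap x.1) (fmap y.1)
        exact hrel x.1 y.1
    · -- backward: L₁ ≅ L₂ → E(L₁) ≅ E(L₂)
      rintro ⟨φ⟩
      have hstrL : ∀ w : W₁, (φ ((0 : V₁), w)).1 = 0 :=
        Hsbg.fst_map_snd_eq_zero ω₁ ω₂ hspan₁ φ
      let hmap : W₁ →ₗ[ℚ] W₂ :=
        (LinearMap.snd ℚ V₂ W₂).comp ((φ.toLinearEquiv : Hsbg ω₁ →ₗ[ℚ] Hsbg ω₂).comp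
          (LinearMap.inr ℚ V₁ W₁))
      let fmap : V₁ →ₗ[ℚ] V₂ :=
        (LinearMap.fst ℚ V₂ W₂).comp ((φ.toLinearEquiv : Hsbg ω₁ →ₗ[ℚ] Hsbg ω₂).comp
          (LinearMap.inl ℚ V₁ W₁))
      have hrel : ∀ v v' : V₁, hmap (ω₁.toFun v v') = ω₂.toFun (fmap v) (fmap v') := by
        intro v v'
        let a : Hsbg ω₁ := (v, 0)
        let a' : Hsbg ω₁ := (v', 0)
        have h1 : (((0 : V₁), ω₁.toFun v v') : Hsbg ω₁) = ⁅a, a'⁆ :=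
          (Hsbg.bracket_def ω₁ a a').symm
        have h2 : φ ⁅a, a'⁆ = ⁅φ a, φ a'⁆ := LieEquiv.map_lie φ a a'
        have h3 : (⁅φ a, φ a'⁆ : Hsbg ω₂) = ((0:V₂), ω₂.toFun (φ a).1 (φ a').1) :=
          Hsbg.bracket_def ω₂ (φ a) (φ a')
        have h4 : φ (((0 : V₁), ω₁.toFun v v') : Hsbg ω₁)
            = ((0:V₂), ω₂.toFun (φ a).1 (φ a').1) := by rw [h1, h2, h3]
        exact congrArg (fun z : Hsbg ω₂ => z.2) h4
      have hinj : Function.Injective hmap := by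
        refine (injective_iff_map_eq_zero hmap).mpr fun w hw => ?_
        have h1 : φ (((0 : V₁), w) : Hsbg ω₁) = 0 := Prod.ext (hstrL w) hw
        have h2 : φ ((0 : Hsbg ω₁)) = 0 := φ.toLieHom.map_zero
        have h3 : (((0 : V₁), w) : Hsbg ω₁) = 0 :=
          φ.toLinearEquiv.injective (h1.trans h2.symm)
        exact congrArg (fun z : Hsbg ω₁ => z.2) h3
      have finj : Function.Injective fmap := by
        refine (injective_iff_map_eq_zero fmap).mpr fun v hv => ?_
        refine hnd₁ v fun v' => ?_
        refine hinj ?_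
        rw [hrel v v', hv]
        simp
      have fsurj : Function.Surjective fmap :=
        (LinearMap.injective_iff_surjective_of_finrank_eq_finrank hV12).mp finj
      have hsurj : Function.Surjective hmap :=
        (LinearMap.injective_iff_surjective_of_finrank_eq_finrank hm).mp hinj
      let feq : V₁ ≃ₗ[ℚ] V₂ := LinearEquiv.ofBijective fmap ⟨finj, fsurj⟩
      let heq : W₁ ≃ₗ[ℚ] W₂ := LinearEquiv.ofBijective hmap ⟨hinj, hsurj⟩
      let A : (Fin n → ℚ) →ₗ[ℚ] (Fin n → ℚ) :=
        LinearMap.pi fun i => (basisPairing b₁).flip (feq.symm (b₂ i))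
      have hA_apply : ∀ (u : Fin n → ℚ) (i : Fin n),
          A u i = basisPairing b₁ u (feq.symm (b₂ i)) := fun _ _ => rfl
      have hAkey : ∀ (u : Fin n → ℚ) (v : V₁),
          basisPairing b₂ (A u) (fmap v) = basisPairing b₁ u v := by
        intro u v
        rw [basisPairing_apply]
        have hterm : ∀ i : Fin n, A u i * b₂.repr (fmap v) i
            = basisPairing b₁ u ((b₂.repr (fmap v) i) • feq.symm (b₂ i)) := by
          intro i
          rw [map_smul, smul_eq_mul, hA_apply]
          ring
        rw [Finset.sum_congr rfl fun i _ => hterm i, ← map_sum]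
        have h2 : (∑ i, (b₂.repr (fmap v) i) • feq.symm (b₂ i))
            = feq.symm (∑ i, (b₂.repr (fmap v) i) • b₂ i) := by
          rw [map_sum]
          simp only [map_smul]
        rw [h2, Module.Basis.sum_repr]
        have h3 : feq.symm (fmap v) = v := feq.symm_apply_apply v
        rw [h3]
      have hAinj : Function.Injective A := by
        refine (injective_iff_map_eq_zero A).mpr fun u hu => ?_
        refine basisPairing_left_zero b₁ fun v => ?_
        rw [← hAkey u v, hu]
        simp
      have hAsurj : Function.Surjective A :=
        LinearMap.injective_iff_surjective.mp hAinj
      let Aeq : (Fin n → ℚ) ≃ₗ[ℚ] (Fin n → ℚ) := LinearEquiv.ofBijective A ⟨hAinj, hAsurj⟩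
      let e : ExtE ω₁ b₁ ≃ₗ[ℚ] ExtE ω₂ b₂ :=
        LinearEquiv.prodCongr (LinearEquiv.prodCongr Aeq feq)
          (LinearEquiv.prodCongr (LinearEquiv.refl ℚ ℚ) heq)
      refine ⟨{ e with map_lie' := ?_ }⟩
      intro x y
      show e ⁅x, y⁆ = ⁅e x, e y⁆
      erw [Hsbg.bracket_def (extAltBil ω₁ b₁) x y, Hsbg.bracket_def (extAltBil ω₂ b₂)]
      rw [extAltBil_apply, extAltBil_apply]
      refine Prod.ext (Prod.ext ?_ ?_) (Prod.ext ?_ ?_)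
      · show A 0 = 0
        exact map_zero A
      · show fmap 0 = 0
        exact map_zero fmap
      · show basisPairing b₁ x.1.1 y.1.2 - basisPairing b₁ y.1.1 x.1.2
          = basisPairing b₂ (A x.1.1) (fmap y.1.2) - basisPairing b₂ (A y.1.1) (fmap x.1.2)
        rw [hAkey, hAkey]
      · show hmap (ω₁.toFun x.1.2 y.1.2) = ω₂.toFun (fmap x.1.2) (fmap y.1.2)
        exact hrel _ _
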